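/- arXiv:2501.05123 — 2 statements merged into one kernel-verified Lean document; each statement's English description precedes it below -/
import Mathlib

section
/- An oriented 2-regular graph (a disjoint union of at least two oriented cycles, each of order at least 3) is {1}-antimagic if and only if at most one of its cycle components is Θ-oriented and all remaining cycle components are unidirectional. -/
open scoped Classical

/-- There is a directed walk of length `k` from `u` to `v` in the digraph with arc relation `A`. -/
def WalkLen {V : Type*} (A : V → V → Prop) : ℕ → V → V → Prop
  | 0, u, v => u = v
  | k + 1, u, v => ∃ w, A u w ∧ WalkLen A k w v

/-- The directed distance from `u` to `v` is exactly `k`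
(i.e. `k` is the length of a shortest directed path from `u` to `v`). -/
def HasDist {V : Type*} (A : V → V → Prop) (u v : V) (k : ℕ) : Prop :=
  WalkLen A k u v ∧ ∀ m < k, ¬ WalkLen A m u v

/-- `y` belongs to the `D`-neighborhood of `v`: the distance from `v` to `y` lies in `D`. -/
def InDNbhd {V : Type*} (A : V → V → Prop) (D : Set ℕ) (v y : V) : Prop :=
  ∃ k ∈ D, HasDist A v y k

/-- The `D`-weight of `v` under the labeling `f`: the sum of labels of the `D`-neighbors. -/
noncomputable def dWeight {V : Type*} [Fintype V] (A : V → V → Prop) (D : Set ℕ)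
    (f : V → ℕ) (v : V) : ℕ :=
  ∑ y : V, if InDNbhd A D v y then f y else 0

/-- The digraph `(V, A)` is `D`-antimagic: some bijective labeling of the vertices by
`1, …, |V|` gives pairwise distinct `D`-weights. -/
def DAntimagic (V : Type*) [Fintype V] (A : V → V → Prop) (D : Set ℕ) : Prop :=
  ∃ f : V ≃ Fin (Fintype.card V),
    Function.Injective fun v => dWeight A D (fun y => (f y : ℕ) + 1) v

/-- The orientation of the cycle `C_n` determined by `σ`: the edge between vertex `i` and
vertex `(i+1) mod n` is directed `i → i+1` when `σ i = true`, and `i+1 → i` otherwise. -/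
def cycleArc (n : ℕ) (σ : Fin n → Bool) (u v : Fin n) : Prop :=
  (σ u = true ∧ (v : ℕ) = ((u : ℕ) + 1) % n) ∨
  (σ v = false ∧ (u : ℕ) = ((v : ℕ) + 1) % n)

/-- The arc relation of the unidirectional oriented cycle `C⃗_n`: arcs `i → (i+1) mod n`. -/
def uniArc (n : ℕ) (u v : Fin n) : Prop :=
  (v : ℕ) = ((u : ℕ) + 1) % n

/-- An orientation of `C_n` is unidirectional if all edges are directed the same way around. -/
def Unidirectional (n : ℕ) (σ : Fin n → Bool) : Prop :=
  (∀ i, σ i = true) ∨ (∀ i, σ i = false)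

/-- A sink: a vertex of out-degree 0. -/
def IsSink {V : Type*} (A : V → V → Prop) (u : V) : Prop :=
  ∀ v, ¬ A u v

/-- A source: a vertex of in-degree 0. -/
def IsSource {V : Type*} (A : V → V → Prop) (u : V) : Prop :=
  ∀ v, ¬ A v u

/-- A digraph is Θ-oriented if it has exactly one sink and exactly one source, and
they are adjacent (so the arc between them goes from the source to the sink). -/
def ThetaOriented {V : Type*} (A : V → V → Prop) : Prop :=
  ∃ s t, IsSink A s ∧ IsSource A t ∧ (∀ u, IsSink A u → u = s) ∧
    (∀ u, IsSource A u → u = t) ∧ A t s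

/-- The arc relation of the Θ-oriented cycle on `Fin n`:
arcs `i → i+1` for `0 ≤ i ≤ n-2`, together with the arc `0 → n-1`. -/
def thetaArc (n : ℕ) (u v : Fin n) : Prop :=
  ((v : ℕ) = (u : ℕ) + 1) ∨ ((u : ℕ) = 0 ∧ (v : ℕ) = n - 1)

/-- The arc relation of a disjoint union of `c` oriented cycles, the `j`-th component having
`len j` vertices and arc relation `A j`. -/
def unionArc (c : ℕ) (len : Fin c → ℕ)
    (A : ∀ j, Fin (len j) → Fin (len j) → Prop)
    (u v : Σ j, Fin (len j)) : Prop :=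
  ∃ h : u.1 = v.1, A v.1 (Fin.cast (congrArg len h) u.2) v.2

/-! ### Auxiliary lemmas -/

section Prelim
variable {V : Type*} {A : V → V → Prop}

lemma TRA_walkLen_one {u v : V} : WalkLen A 1 u v ↔ A u v := by
  constructor
  · rintro ⟨w, hw, h⟩
    have h' : w = v := h
    exact h' ▸ hw
  · intro h; exact ⟨v, h, rfl⟩

lemma TRA_inDNbhd_one (hA : ∀ v, ¬ A v v) {v y : V} : InDNbhd A {1} v y ↔ A v y := by
  constructor
  · rintro ⟨k, hk, h1, _⟩
    simp only [Set.mem_singleton_iff] at hk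
    subst hk
    exact TRA_walkLen_one.mp h1
  · intro h
    refine ⟨1, rfl, TRA_walkLen_one.mpr h, ?_⟩
    intro m hm
    interval_cases m
    intro h0
    have h0' : v = y := h0
    subst h0'
    exact hA v h

lemma TRA_dWeight_eq [Fintype V] (hA : ∀ v, ¬ A v v) {f : V → ℕ} {v : V} {S : Finset V}
    (h : ∀ y, A v y ↔ y ∈ S) : dWeight A {1} f v = ∑ y ∈ S, f y := by
  unfold dWeight
  have key : ∀ y : V, (if InDNbhd A {1} v y then f y else 0) = if y ∈ S then f y else 0 := by
    intro y
    by_cases hy : InDNbhd A {1} v y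
    · rw [if_pos hy, if_pos ((h y).mp ((TRA_inDNbhd_one hA).mp hy))]
    · rw [if_neg hy, if_neg (fun hs => hy ((TRA_inDNbhd_one hA).mpr ((h y).mpr hs)))]
  rw [Finset.sum_congr rfl fun y _ => key y, Finset.sum_ite_mem, Finset.univ_inter]

lemma TRA_wt_sink [Fintype V] (hA : ∀ v, ¬ A v v) {f : V → ℕ} {v : V}
    (h : IsSink A v) : dWeight A {1} f v = 0 := by
  rw [TRA_dWeight_eq hA (S := ∅) (fun y => by simpa using h y)]
  simp

lemma TRA_wt_unique [Fintype V] (hA : ∀ v, ¬ A v v) {f : V → ℕ} {v w : V}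
    (h : ∀ y, A v y ↔ y = w) : dWeight A {1} f v = f w := by
  rw [TRA_dWeight_eq hA (S := {w}) (fun y => by simpa using h y)]
  simp

lemma TRA_wt_pair [Fintype V] (hA : ∀ v, ¬ A v v) {f : V → ℕ} {v w1 w2 : V}
    (h : ∀ y, A v y ↔ (y = w1 ∨ y = w2)) (hne : w1 ≠ w2) :
    dWeight A {1} f v = f w1 + f w2 := by
  rw [TRA_dWeight_eq hA (S := {w1, w2}) (fun y => by simpa using h y)]
  exact Finset.sum_pair hne

end Prelim

open Fin.CommRing

section FinFacts
variable {n : ℕ} [NeZero n]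

lemma TRA_fin_val_add_one (u : Fin n) : ((u + 1 : Fin n) : ℕ) = ((u : ℕ) + 1) % n := by
  simp [Fin.add_def, Fin.val_one']

lemma TRA_fin_one_ne_zero (h : 3 ≤ n) : (1 : Fin n) ≠ 0 := by
  intro hh
  have h2 : ((1 : Fin n)).val = 0 := by rw [hh]; rfl
  rw [Fin.val_one', Nat.mod_eq_of_lt (by omega)] at h2
  omega

lemma TRA_fin_two_ne_zero (h : 3 ≤ n) : (1 : Fin n) + 1 ≠ 0 := by
  intro hh
  have h2 : ((1 : Fin n) + 1).val = 0 := by rw [hh]; rfl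
  rw [Fin.add_def, Fin.val_one', Nat.mod_eq_of_lt (show 1 < n by omega)] at h2
  have h3 : (1 + 1) % n = 0 := h2
  rw [Nat.mod_eq_of_lt (by omega)] at h3
  omega

lemma TRA_fin_succ_ne_self (h : 3 ≤ n) (u : Fin n) : u + 1 ≠ u := by
  intro hh
  have h2 : (1 : Fin n) = 0 := by
    have := sub_eq_zero.mpr hh
    rwa [show u + 1 - u = 1 by ring] at this
  exact TRA_fin_one_ne_zero h h2

lemma TRA_fin_pred_ne_self (h : 3 ≤ n) (u : Fin n) : u - 1 ≠ u := by
  intro hh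
  have h2 : (1 : Fin n) = 0 := by
    have := sub_eq_zero.mpr hh.symm
    rwa [show u - (u - 1) = 1 by ring] at this
  exact TRA_fin_one_ne_zero h h2

lemma TRA_fin_succ_ne_pred (h : 3 ≤ n) (u : Fin n) : u + 1 ≠ u - 1 := by
  intro hh
  have h2 : (1 : Fin n) + 1 = 0 := by
    have := sub_eq_zero.mpr hh
    rwa [show u + 1 - (u - 1) = 1 + 1 by ring] at this
  exact TRA_fin_two_ne_zero h h2

end FinFacts

section Cycle
variable {n : ℕ} [NeZero n] {σ : Fin n → Bool}

lemma TRA_fin_eq_succ_iff (u v : Fin n) : (v : ℕ) = ((u : ℕ) + 1) % n ↔ v = u + 1 := by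
  rw [Fin.ext_iff, TRA_fin_val_add_one]

lemma TRA_arc_iff (u v : Fin n) :
    cycleArc n σ u v ↔ (σ u = true ∧ v = u + 1) ∨ (σ (u - 1) = false ∧ v = u - 1) := by
  unfold cycleArc
  rw [TRA_fin_eq_succ_iff, TRA_fin_eq_succ_iff]
  constructor
  · rintro (⟨h1, h2⟩ | ⟨h1, h2⟩)
    · exact Or.inl ⟨h1, h2⟩
    · have hv : v = u - 1 := by rw [h2]; ring
      subst hv
      exact Or.inr ⟨h1, rfl⟩
  · rintro (⟨h1, h2⟩ | ⟨h1, h2⟩)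
    · exact Or.inl ⟨h1, h2⟩
    · subst h2
      exact Or.inr ⟨h1, by ring⟩

lemma TRA_cycle_loopless (h : 3 ≤ n) (u : Fin n) : ¬ cycleArc n σ u u := by
  intro hu
  rcases (TRA_arc_iff u u).mp hu with ⟨_, h2⟩ | ⟨_, h2⟩
  · exact TRA_fin_succ_ne_self h u h2.symm
  · exact TRA_fin_pred_ne_self h u h2.symm

lemma TRA_sink_iff (u : Fin n) :
    IsSink (cycleArc n σ) u ↔ (σ u = false ∧ σ (u - 1) = true) := by
  constructor
  · intro hs
    constructor
    · by_contra hb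
      rw [Bool.not_eq_false] at hb
      exact hs (u + 1) ((TRA_arc_iff u _).mpr (Or.inl ⟨hb, rfl⟩))
    · by_contra hb
      rw [Bool.not_eq_true] at hb
      exact hs (u - 1) ((TRA_arc_iff u _).mpr (Or.inr ⟨hb, rfl⟩))
  · rintro ⟨h1, h2⟩ v hv
    rcases (TRA_arc_iff u v).mp hv with ⟨h3, _⟩ | ⟨h3, _⟩
    · rw [h1] at h3; exact Bool.false_ne_true h3
    · rw [h2] at h3; simp at h3

lemma TRA_source_iff (u : Fin n) :
    IsSource (cycleArc n σ) u ↔ (σ u = true ∧ σ (u - 1) = false) := by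
  constructor
  · intro hs
    constructor
    · by_contra hb
      rw [Bool.not_eq_true] at hb
      refine hs (u + 1) ((TRA_arc_iff _ _).mpr (Or.inr ⟨?_, by ring⟩))
      rwa [show u + 1 - 1 = u by ring]
    · by_contra hb
      rw [Bool.not_eq_false] at hb
      exact hs (u - 1) ((TRA_arc_iff _ _).mpr (Or.inl ⟨hb, by ring⟩))
  · rintro ⟨h1, h2⟩ v hv
    rcases (TRA_arc_iff v u).mp hv with ⟨h3, h4⟩ | ⟨h3, h4⟩
    · have hv' : v = u - 1 := by rw [h4]; ring
      rw [hv', h2] at h3; exact Bool.false_ne_true h3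
    · have hv' : v = u + 1 := by rw [h4]; ring
      rw [hv', show u + 1 - 1 = u by ring, h1] at h3
      exact Bool.false_ne_true h3.symm

lemma TRA_outdeg_le_one (h : 3 ≤ n) (u : Fin n) (hns : ¬ (σ u = true ∧ σ (u - 1) = false))
    {v w : Fin n} (hv : cycleArc n σ u v) (hw : cycleArc n σ u w) : v = w := by
  rcases (TRA_arc_iff u v).mp hv with ⟨h1, h2⟩ | ⟨h1, h2⟩ <;>
    rcases (TRA_arc_iff u w).mp hw with ⟨h3, h4⟩ | ⟨h3, h4⟩
  · rw [h2, h4]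
  · exact absurd ⟨h1, h3⟩ hns
  · exact absurd ⟨h3, h1⟩ hns
  · rw [h2, h4]

lemma TRA_indeg_structure {v y : Fin n} (hv : cycleArc n σ v y) :
    (v = y - 1 ∧ σ (y - 1) = true) ∨ (v = y + 1 ∧ σ y = false) := by
  rcases (TRA_arc_iff v y).mp hv with ⟨h1, h2⟩ | ⟨h1, h2⟩
  · left
    refine ⟨by rw [h2]; ring, ?_⟩
    rwa [show y - 1 = v by rw [h2]; ring]
  · right
    refine ⟨by rw [h2]; ring, ?_⟩
    rwa [show y = v - 1 by rw [h2]]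

lemma TRA_count_sink_eq_source :
    (Finset.univ.filter fun u : Fin n => σ u = false ∧ σ (u - 1) = true).card =
    (Finset.univ.filter fun u : Fin n => σ u = true ∧ σ (u - 1) = false).card := by
  have key : ∀ u : Fin n,
      ((if σ u = false ∧ σ (u - 1) = true then 1 else 0) + (if σ u = true then 1 else 0) : ℕ)
      = (if σ u = true ∧ σ (u - 1) = false then 1 else 0)
        + (if σ (u - 1) = true then 1 else 0) := by
    intro u; cases h1 : σ u <;> cases h2 : σ (u - 1) <;> simp [h1, h2]
  have hre : ∑ u : Fin n, (if σ (u - 1) = true then (1 : ℕ) else 0)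
      = ∑ u : Fin n, (if σ u = true then (1 : ℕ) else 0) :=
    Equiv.sum_comp (Equiv.subRight (1 : Fin n)) (fun u => if σ u = true then (1 : ℕ) else 0)
  have h1 := Finset.sum_congr rfl (fun u (_ : u ∈ Finset.univ) => key u)
  rw [Finset.sum_add_distrib, Finset.sum_add_distrib, hre] at h1
  rw [Finset.card_filter, Finset.card_filter]
  exact Nat.add_right_cancel h1

lemma TRA_propagate (b : Bool) (hstep : ∀ u, σ u = b → σ (u + 1) = b) {a : Fin n}
    (ha : σ a = b) : ∀ v, σ v = b := by
  have key : ∀ k : ℕ, σ (a + (k : Fin n)) = b := by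
    intro k
    induction k with
    | zero => simpa using ha
    | succ k ih =>
      have hc : ((k + 1 : ℕ) : Fin n) = (k : Fin n) + 1 := by push_cast; ring
      rw [hc, ← add_assoc]
      exact hstep _ ih
  intro v
  have := key (v - a).val
  rwa [Fin.cast_val_eq_self, add_sub_cancel] at this

lemma TRA_exists_sink_of_nonconst (h : 3 ≤ n) {a b : Fin n} (ha : σ a = true)
    (hb : σ b = false) : ∃ u, σ u = false ∧ σ (u - 1) = true := by
  by_contra hc
  push_neg at hc
  have hstep : ∀ u, σ u = true → σ (u + 1) = true := by
    intro u hu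
    by_contra h2
    rw [Bool.not_eq_true] at h2
    exact absurd (by rwa [show u + 1 - 1 = u by ring]) (hc (u + 1) h2).elim
  have := TRA_propagate true hstep ha b
  rw [hb] at this; exact Bool.false_ne_true this

lemma TRA_exists_source_of_nonconst (h : 3 ≤ n) {a b : Fin n} (ha : σ a = true)
    (hb : σ b = false) : ∃ u, σ u = true ∧ σ (u - 1) = false := by
  by_contra hc
  push_neg at hc
  have hstep : ∀ u, σ u = false → σ (u + 1) = false := by
    intro u hu
    by_contra h2
    rw [Bool.not_eq_false] at h2
    exact absurd (by rwa [show u + 1 - 1 = u by ring]) (hc (u + 1) h2).elim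
  have := TRA_propagate false hstep hb a
  rw [ha] at this; exact Bool.false_ne_true this.symm

lemma TRA_uni_out (huni : Unidirectional n σ) (u w : Fin n) :
    cycleArc n σ u w ↔ w = (if σ u = true then u + 1 else u - 1) := by
  rcases huni with hT | hF
  · rw [if_pos (hT u), TRA_arc_iff]
    constructor
    · rintro (⟨_, h2⟩ | ⟨h1, _⟩)
      · exact h2
      · rw [hT (u - 1)] at h1; exact absurd h1 (by simp)
    · intro h; exact Or.inl ⟨hT u, h⟩
  · rw [if_neg (by simp [hF u]), TRA_arc_iff]
    constructor
    · rintro (⟨h1, _⟩ | ⟨_, h2⟩)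
      · rw [hF u] at h1; exact absurd h1 (by simp)
      · exact h2
    · intro h; exact Or.inr ⟨hF (u - 1), h⟩

lemma TRA_uni_indeg (huni : Unidirectional n σ) {v w y : Fin n}
    (hv : cycleArc n σ v y) (hw : cycleArc n σ w y) : v = w := by
  rcases huni with hT | hF
  · rcases TRA_indeg_structure hv with ⟨h1, _⟩ | ⟨_, h2⟩
    · rcases TRA_indeg_structure hw with ⟨h3, _⟩ | ⟨_, h4⟩
      · rw [h1, h3]
      · rw [hT y] at h4; exact absurd h4 (by simp)
    · rw [hT y] at h2; exact absurd h2 (by simp)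
  · rcases TRA_indeg_structure hv with ⟨_, h2⟩ | ⟨h1, _⟩
    · rw [hF (y - 1)] at h2; exact absurd h2 (by simp)
    · rcases TRA_indeg_structure hw with ⟨_, h4⟩ | ⟨h3, _⟩
      · rw [hF (y - 1)] at h4; exact absurd h4 (by simp)
      · rw [h1, h3]

end Cycle

section Union
variable {c : ℕ} {len : Fin c → ℕ} {A : ∀ j, Fin (len j) → Fin (len j) → Prop}

lemma TRA_unionArc_mk_iff {j : Fin c} {u : Fin (len j)} {y : Σ j, Fin (len j)} :
    unionArc c len A ⟨j, u⟩ y ↔ ∃ w, A j u w ∧ y = ⟨j, w⟩ := by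
  constructor
  · rintro ⟨h, ha⟩
    obtain ⟨j', v⟩ := y
    dsimp at h
    subst h
    exact ⟨v, ha, rfl⟩
  · rintro ⟨w, hw, rfl⟩
    exact ⟨rfl, hw⟩

lemma TRA_unionArc_same {j : Fin c} {u v : Fin (len j)} :
    unionArc c len A ⟨j, u⟩ ⟨j, v⟩ ↔ A j u v := by
  rw [TRA_unionArc_mk_iff]
  constructor
  · rintro ⟨w, hw, he⟩
    obtain rfl : w = v := eq_of_heq (Sigma.mk.inj_iff.mp he).2.symm
    exact hw
  · intro h; exact ⟨v, h, rfl⟩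

lemma TRA_unionArc_fst {v y : Σ j, Fin (len j)} (h : unionArc c len A v y) : v.1 = y.1 :=
  h.1

lemma TRA_isSink_union_iff {j : Fin c} {u : Fin (len j)} :
    IsSink (unionArc c len A) ⟨j, u⟩ ↔ IsSink (A j) u := by
  constructor
  · intro hs v hv
    exact hs ⟨j, v⟩ (TRA_unionArc_same.mpr hv)
  · intro hs y hy
    rcases TRA_unionArc_mk_iff.mp hy with ⟨w, hw, _⟩
    exact hs w hw

lemma TRA_union_loopless (h : ∀ j (u : Fin (len j)), ¬ A j u u) :
    ∀ v : Σ j, Fin (len j), ¬ unionArc c len A v v := by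
  rintro ⟨j, u⟩ hv
  exact h j u (TRA_unionArc_same.mp hv)

end Union

/-- An oriented 2-regular graph (a disjoint union of at least two oriented
cycles, each of order at least 3) is `{1}`-antimagic iff at most one of its cycle components
is Θ-oriented and all remaining components are unidirectional. -/
theorem twoRegular_one_antimagic_iff (c : ℕ) (hc : 2 ≤ c) (len : Fin c → ℕ)
    (hlen : ∀ j, 3 ≤ len j) (σ : ∀ j, Fin (len j) → Bool) :
    DAntimagic (Σ j, Fin (len j))
        (unionArc c len fun j => cycleArc (len j) (σ j)) {1} ↔
      ({j | ThetaOriented (cycleArc (len j) (σ j))}.Subsingleton ∧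
        ∀ j, ThetaOriented (cycleArc (len j) (σ j)) ∨ Unidirectional (len j) (σ j)) := by
  haveI : ∀ j, NeZero (len j) := fun j => ⟨by have := hlen j; omega⟩
  set Arc := unionArc c len fun j => cycleArc (len j) (σ j) with hArcdef
  have hloop : ∀ v, ¬ Arc v v :=
    TRA_union_loopless fun j u => TRA_cycle_loopless (hlen j) u
  constructor
  · -- forward direction
    rintro ⟨f, hf⟩
    set g : (Σ j, Fin (len j)) → ℕ := fun y => (f y : ℕ) + 1 with hgdef
    have sink_uniq : ∀ v w : Σ j, Fin (len j), IsSink Arc v → IsSink Arc w → v = w := by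
      intro v w hv hw
      apply hf
      show dWeight Arc {1} g v = dWeight Arc {1} g w
      rw [TRA_wt_sink hloop hv, TRA_wt_sink hloop hw]
    -- a component with both values of σ is Θ-oriented
    have theta_of_nonconst : ∀ j (a b : Fin (len j)), σ j a = true → σ j b = false →
        ThetaOriented (cycleArc (len j) (σ j)) := by
      intro j a b ha hb
      obtain ⟨s, hs1, hs2⟩ := TRA_exists_sink_of_nonconst (hlen j) ha hb
      have hsink : IsSink (cycleArc (len j) (σ j)) s := (TRA_sink_iff s).mpr ⟨hs1, hs2⟩
      have hsinkU : ∀ u, IsSink (cycleArc (len j) (σ j)) u → u = s := by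
        intro u hu
        have := sink_uniq ⟨j, u⟩ ⟨j, s⟩ (TRA_isSink_union_iff.mpr hu)
          (TRA_isSink_union_iff.mpr hsink)
        exact eq_of_heq (Sigma.mk.inj_iff.mp this).2
      -- the two in-neighbors of s
      have harc1 : cycleArc (len j) (σ j) (s - 1) s :=
        (TRA_arc_iff _ _).mpr (Or.inl ⟨hs2, by ring⟩)
      have harc2 : cycleArc (len j) (σ j) (s + 1) s :=
        (TRA_arc_iff _ _).mpr (Or.inr ⟨by rwa [show s + 1 - 1 = s by ring], by ring⟩)
      have hp12 : s - 1 ≠ s + 1 := fun h => TRA_fin_succ_ne_pred (hlen j) s h.symm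
      -- one of them must be a source
      have hsource : ∃ t, (σ j t = true ∧ σ j (t - 1) = false) ∧ cycleArc (len j) (σ j) t s := by
        by_cases h1 : σ j (s - 1) = true ∧ σ j (s - 1 - 1) = false
        · exact ⟨s - 1, h1, harc1⟩
        by_cases h2 : σ j (s + 1) = true ∧ σ j (s + 1 - 1) = false
        · exact ⟨s + 1, h2, harc2⟩
        exfalso
        have w1 : dWeight Arc {1} g ⟨j, s - 1⟩ = g ⟨j, s⟩ := by
          refine TRA_wt_unique hloop ?_
          intro y
          rw [show Arc ⟨j, s - 1⟩ y ↔ _ from TRA_unionArc_mk_iff]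
          constructor
          · rintro ⟨w, hw, rfl⟩
            rw [TRA_outdeg_le_one (hlen j) _ h1 hw harc1]
          · rintro rfl
            exact ⟨s, harc1, rfl⟩
        have w2 : dWeight Arc {1} g ⟨j, s + 1⟩ = g ⟨j, s⟩ := by
          refine TRA_wt_unique hloop ?_
          intro y
          rw [show Arc ⟨j, s + 1⟩ y ↔ _ from TRA_unionArc_mk_iff]
          constructor
          · rintro ⟨w, hw, rfl⟩
            rw [TRA_outdeg_le_one (hlen j) _ h2 hw harc2]
          · rintro rfl
            exact ⟨s, harc2, rfl⟩
        have : (⟨j, s - 1⟩ : Σ j, Fin (len j)) = ⟨j, s + 1⟩ := by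
          apply hf
          show dWeight Arc {1} g _ = dWeight Arc {1} g _
          rw [w1, w2]
        exact hp12 (eq_of_heq (Sigma.mk.inj_iff.mp this).2)
      obtain ⟨t, ht, hts⟩ := hsource
      refine ⟨s, t, hsink, (TRA_source_iff t).mpr ht, hsinkU, ?_, hts⟩
      -- uniqueness of the source via counting
      intro u hu
      have hucond := (TRA_source_iff u).mp hu
      have hcount := TRA_count_sink_eq_source (σ := σ j)
      have hsinkset : (Finset.univ.filter fun u : Fin (len j) =>
          σ j u = false ∧ σ j (u - 1) = true) = {s} := by
        ext x
        simp only [Finset.mem_filter, Finset.mem_univ, true_and, Finset.mem_singleton]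
        constructor
        · intro hx
          exact hsinkU x ((TRA_sink_iff x).mpr hx)
        · rintro rfl
          exact ⟨hs1, hs2⟩
      rw [hsinkset, Finset.card_singleton] at hcount
      have hle := Finset.card_le_one.mp (le_of_eq hcount.symm)
      exact hle u (by simp [hucond]) t (by simp [ht])
    constructor
    · -- subsingleton of Θ components
      intro j1 hj1 j2 hj2
      simp only [Set.mem_setOf_eq] at hj1 hj2
      obtain ⟨s1, _, hs1, _⟩ := hj1
      obtain ⟨s2, _, hs2, _⟩ := hj2
      have := sink_uniq ⟨j1, s1⟩ ⟨j2, s2⟩ (TRA_isSink_union_iff.mpr hs1)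
        (TRA_isSink_union_iff.mpr hs2)
      exact (Sigma.mk.inj_iff.mp this).1
    · -- each component is Θ or unidirectional
      intro j
      by_cases hT : ∀ i, σ j i = true
      · exact Or.inr (Or.inl hT)
      by_cases hF : ∀ i, σ j i = false
      · exact Or.inr (Or.inr hF)
      push_neg at hT hF
      obtain ⟨b, hb⟩ := hT
      obtain ⟨a, ha⟩ := hF
      have hb' : σ j b = false := by simpa using hb
      have ha' : σ j a = true := by simpa using ha
      exact Or.inl (theta_of_nonconst j a b ha' hb')
  · -- backward direction
    rintro ⟨hsub, hall⟩
    by_cases hθ : ∃ j0, ThetaOriented (cycleArc (len j0) (σ j0))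
    · obtain ⟨j0, hθ0⟩ := hθ
      obtain ⟨s, t, hsinkS, hsourceT, huS, huT, hAts⟩ := id hθ0
      have hn0 := hlen j0
      have hσsF : σ j0 s = false := ((TRA_sink_iff s).mp hsinkS).1
      have hσs1T : σ j0 (s - 1) = true := ((TRA_sink_iff s).mp hsinkS).2
      have hσtT : σ j0 t = true := ((TRA_source_iff t).mp hsourceT).1
      have hσt1F : σ j0 (t - 1) = false := ((TRA_source_iff t).mp hsourceT).2
      have hst : s = t + 1 ∨ s = t - 1 := by
        rcases (TRA_arc_iff t s).mp hAts with ⟨_, h2⟩ | ⟨_, h2⟩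
        · exact Or.inl h2
        · exact Or.inr h2
      set s' : Fin (len j0) := if s = t + 1 then t - 1 else t + 1 with hs'def
      have hss' : (s = t + 1 ∧ s' = t - 1) ∨ (s = t - 1 ∧ s' = t + 1) := by
        by_cases h2 : s = t + 1
        · exact Or.inl ⟨h2, by rw [hs'def, if_pos h2]⟩
        · rcases hst with h | h
          · exact absurd h h2
          · exact Or.inr ⟨h, by rw [hs'def, if_neg h2]⟩
      have hsne : s ≠ t := by
        rcases hss' with ⟨h, _⟩ | ⟨h, _⟩
        · rw [h]; exact TRA_fin_succ_ne_self hn0 t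
        · rw [h]; exact TRA_fin_pred_ne_self hn0 t
      have hs'ne : s' ≠ t := by
        rcases hss' with ⟨_, h⟩ | ⟨_, h⟩
        · rw [h]; exact TRA_fin_pred_ne_self hn0 t
        · rw [h]; exact TRA_fin_succ_ne_self hn0 t
      have hsns' : s ≠ s' := by
        rcases hss' with ⟨h1, h2⟩ | ⟨h1, h2⟩
        · rw [h1, h2]; exact TRA_fin_succ_ne_pred hn0 t
        · rw [h1, h2]; intro hh; exact TRA_fin_succ_ne_pred hn0 t hh.symm
      have houtT : ∀ w, cycleArc (len j0) (σ j0) t w ↔ (w = s ∨ w = s') := by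
        intro w
        rw [TRA_arc_iff]
        constructor
        · rintro (⟨_, h2⟩ | ⟨_, h2⟩)
          · rcases hss' with ⟨h3, _⟩ | ⟨_, h4⟩
            · exact Or.inl (by rw [h2, ← h3])
            · exact Or.inr (by rw [h2, ← h4])
          · rcases hss' with ⟨_, h4⟩ | ⟨h3, _⟩
            · exact Or.inr (by rw [h2, ← h4])
            · exact Or.inl (by rw [h2, ← h3])
        · rintro (rfl | rfl)
          · rcases hss' with ⟨h3, _⟩ | ⟨h3, _⟩
            · exact Or.inl ⟨hσtT, h3⟩
            · exact Or.inr ⟨hσt1F, h3⟩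
          · rcases hss' with ⟨_, h4⟩ | ⟨_, h4⟩
            · exact Or.inr ⟨hσt1F, h4⟩
            · exact Or.inl ⟨hσtT, h4⟩
      have hins' : ∀ x, cycleArc (len j0) (σ j0) x s' → x = t := by
        intro x hx
        rcases TRA_indeg_structure hx with ⟨h1, h2⟩ | ⟨h1, h2⟩
        · rcases hss' with ⟨h3, h4⟩ | ⟨h3, h4⟩
          · exfalso
            have hsink' : IsSink (cycleArc (len j0) (σ j0)) s' :=
              (TRA_sink_iff s').mpr ⟨by rw [h4]; exact hσt1F, h2⟩
            have heq := huS s' hsink'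
            rw [h4, h3] at heq
            exact TRA_fin_succ_ne_pred hn0 t heq.symm
          · rw [h1, h4]; ring
        · rcases hss' with ⟨h3, h4⟩ | ⟨h3, h4⟩
          · rw [h1, h4]; ring
          · exfalso
            have hsink' : IsSink (cycleArc (len j0) (σ j0)) s' :=
              (TRA_sink_iff s').mpr ⟨h2, by rw [h4, show t + 1 - 1 = t by ring]; exact hσtT⟩
            exact hsns' (huS s' hsink').symm
      have hord : ∀ u : Fin (len j0), u ≠ s → u ≠ t →
          ∀ w, cycleArc (len j0) (σ j0) u w ↔ w = (if σ j0 u = true then u + 1 else u - 1) := by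
        intro u hus hut w
        by_cases hσu : σ j0 u = true
        · rw [if_pos hσu, TRA_arc_iff]
          constructor
          · rintro (⟨_, h2⟩ | ⟨h1, _⟩)
            · exact h2
            · exact absurd (huT u ((TRA_source_iff u).mpr ⟨hσu, h1⟩)) hut
          · intro hww; exact Or.inl ⟨hσu, hww⟩
        · have hσuF : σ j0 u = false := by simpa using hσu
          have hσu1 : σ j0 (u - 1) = false := by
            by_contra hcc
            have hcc' : σ j0 (u - 1) = true := by simpa using hcc
            exact hus (huS u ((TRA_sink_iff u).mpr ⟨hσuF, hcc'⟩))
          rw [if_neg hσu, TRA_arc_iff]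
          constructor
          · rintro (⟨h1, _⟩ | ⟨_, h2⟩)
            · rw [hσuF] at h1; exact absurd h1 (by simp)
            · exact h2
          · intro hww; exact Or.inr ⟨hσu1, hww⟩
      have huni : ∀ j, j ≠ j0 → Unidirectional (len j) (σ j) := by
        intro j hj
        refine (hall j).resolve_left fun hθj => hj (hsub hθj hθ0)
      set S : Σ j, Fin (len j) := ⟨j0, s⟩ with hSdef
      set T : Σ j, Fin (len j) := ⟨j0, t⟩ with hTdef
      set S' : Σ j, Fin (len j) := ⟨j0, s'⟩ with hS'def2
      set o : (Σ j, Fin (len j)) → (Σ j, Fin (len j)) :=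
        fun v => ⟨v.1, if σ v.1 v.2 = true then v.2 + 1 else v.2 - 1⟩ with hodef
      have hO : ∀ v : Σ j, Fin (len j), v ≠ S → v ≠ T → ∀ y, Arc v y ↔ y = o v := by
        rintro ⟨j, u⟩ hvS hvT y
        rw [show Arc ⟨j, u⟩ y ↔ _ from TRA_unionArc_mk_iff]
        by_cases hj : j = j0
        · subst hj
          have hus : u ≠ s := fun hh => hvS (by rw [hh])
          have hut : u ≠ t := fun hh => hvT (by rw [hh])
          constructor
          · rintro ⟨w, hw, rfl⟩
            rw [(hord u hus hut w).mp hw]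
          · rintro rfl
            exact ⟨_, (hord u hus hut _).mpr rfl, rfl⟩
        · constructor
          · rintro ⟨w, hw, rfl⟩
            rw [(TRA_uni_out (huni j hj) u w).mp hw]
          · rintro rfl
            exact ⟨_, (TRA_uni_out (huni j hj) u _).mpr rfl, rfl⟩
      have hOT : ∀ y, Arc T y ↔ (y = S ∨ y = S') := by
        intro y
        rw [show Arc T y ↔ _ from TRA_unionArc_mk_iff]
        constructor
        · rintro ⟨w, hw, rfl⟩
          rcases (houtT w).mp hw with rfl | rfl
          · exact Or.inl rfl
          · exact Or.inr rfl
        · rintro (rfl | rfl)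
          · exact ⟨s, (houtT s).mpr (Or.inl rfl), rfl⟩
          · exact ⟨s', (houtT s').mpr (Or.inr rfl), rfl⟩
      have hSinkS : IsSink Arc S := TRA_isSink_union_iff.mpr hsinkS
      have hIndeg : ∀ v w y : Σ j, Fin (len j), Arc v y → Arc w y → v ≠ T → w ≠ T → v = w := by
        rintro ⟨j1, u1⟩ ⟨j2, u2⟩ ⟨j3, u3⟩ h1 h2 hv hw
        obtain rfl : j1 = j3 := TRA_unionArc_fst h1
        obtain rfl : j2 = j1 := TRA_unionArc_fst h2
        have h1' : cycleArc (len j2) (σ j2) u1 u3 := TRA_unionArc_same.mp h1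
        have h2' : cycleArc (len j2) (σ j2) u2 u3 := TRA_unionArc_same.mp h2
        by_cases hj : j2 = j0
        · subst hj
          have hu1t : u1 ≠ t := fun hh => hv (by rw [hh])
          have hu2t : u2 ≠ t := fun hh => hw (by rw [hh])
          have key : u1 = u2 := by
            rcases TRA_indeg_structure h1' with ⟨ha1, ha2⟩ | ⟨ha1, ha2⟩ <;>
              rcases TRA_indeg_structure h2' with ⟨hb1, hb2⟩ | ⟨hb1, hb2⟩
            · rw [ha1, hb1]
            · exfalso
              have hu3s : u3 = s := huS u3 ((TRA_sink_iff u3).mpr ⟨hb2, ha2⟩)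
              rcases hss' with ⟨h3, _⟩ | ⟨h3, _⟩
              · exact hu1t (by rw [ha1, hu3s, h3]; ring)
              · exact hu2t (by rw [hb1, hu3s, h3]; ring)
            · exfalso
              have hu3s : u3 = s := huS u3 ((TRA_sink_iff u3).mpr ⟨ha2, hb2⟩)
              rcases hss' with ⟨h3, _⟩ | ⟨h3, _⟩
              · exact hu2t (by rw [hb1, hu3s, h3]; ring)
              · exact hu1t (by rw [ha1, hu3s, h3]; ring)
            · rw [ha1, hb1]
          rw [key]
        · rw [TRA_uni_indeg (huni j2 hj) h1' h2']
      have hInS' : ∀ v : Σ j, Fin (len j), Arc v S' → v = T := by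
        rintro ⟨j, u⟩ hv
        obtain rfl : j = j0 := TRA_unionArc_fst hv
        have hv' := TRA_unionArc_same.mp hv
        rw [hTdef, hins' u hv']
      -- the labeling
      haveI : Nonempty (Σ j, Fin (len j)) := ⟨S⟩
      set N := Fintype.card (Σ j, Fin (len j)) with hNdef
      have hN : 0 < N := Fintype.card_pos
      set e := Fintype.equivFin (Σ j, Fin (len j)) with hedef
      set f := e.trans (Equiv.swap (e S') ⟨N - 1, by omega⟩) with hfdef
      set g : (Σ j, Fin (len j)) → ℕ := fun y => (f y : ℕ) + 1 with hgdef
      have hfS' : (f S' : ℕ) = N - 1 := by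
        rw [hfdef]
        simp [Equiv.swap_apply_left]
      have hgS' : g S' = N := by
        show (f S' : ℕ) + 1 = N
        omega
      have hgpos : ∀ y, 1 ≤ g y := fun y => Nat.le_add_left 1 _
      have hglt : ∀ y, y ≠ S' → g y < N := by
        intro y hy
        have h1 : f y ≠ f S' := fun hh => hy (f.injective hh)
        have h2 : (f y : ℕ) ≠ N - 1 := by
          intro hh
          exact h1 (Fin.ext (by rw [hh, hfS']))
        have h3 := (f y).isLt
        show (f y : ℕ) + 1 < N
        omega
      refine ⟨f, ?_⟩
      intro v w h
      have h' : dWeight Arc {1} g v = dWeight Arc {1} g w := h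
      clear h
      have hWS : dWeight Arc {1} g S = 0 := TRA_wt_sink hloop hSinkS
      have hWT : dWeight Arc {1} g T = g S + g S' := by
        refine TRA_wt_pair hloop hOT ?_
        intro hh
        exact hsns' (eq_of_heq (Sigma.mk.inj_iff.mp (show (⟨j0, s⟩ : Σ j, Fin (len j)) = ⟨j0, s'⟩ from hh)).2)
      have hWO : ∀ v : Σ j, Fin (len j), v ≠ S → v ≠ T →
          dWeight Arc {1} g v = g (o v) := fun v h1 h2 => TRA_wt_unique hloop (hO v h1 h2)
      have honeS' : ∀ v : Σ j, Fin (len j), v ≠ S → v ≠ T → o v ≠ S' := by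
        intro v h1 h2 hcon
        apply h2
        apply hInS' v
        have := (hO v h1 h2 (o v)).mpr rfl
        rwa [hcon] at this
      rcases eq_or_ne v S with rfl | hvS
      · rcases eq_or_ne w S with rfl | hwS
        · rfl
        · exfalso
          rcases eq_or_ne w T with rfl | hwT
          · rw [hWS, hWT] at h'
            have := hgpos S; have := hgpos S'; omega
          · rw [hWS, hWO w hwS hwT] at h'
            have := hgpos (o w); omega
      · rcases eq_or_ne w S with rfl | hwS
        · exfalso
          rcases eq_or_ne v T with rfl | hvT
          · rw [hWS, hWT] at h'
            have := hgpos S; have := hgpos S'; omega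
          · rw [hWS, hWO v hvS hvT] at h'
            have := hgpos (o v); omega
        · rcases eq_or_ne v T with rfl | hvT
          · rcases eq_or_ne w T with rfl | hwT
            · rfl
            · exfalso
              rw [hWT, hWO w hwS hwT] at h'
              have h1 := hglt (o w) (honeS' w hwS hwT)
              have h2 := hgpos S
              rw [hgS'] at h'
              omega
          · rcases eq_or_ne w T with rfl | hwT
            · exfalso
              rw [hWT, hWO v hvS hvT] at h'
              have h1 := hglt (o v) (honeS' v hvS hvT)
              have h2 := hgpos S
              rw [hgS'] at h'
              omega
            · rw [hWO v hvS hvT, hWO w hwS hwT] at h'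
              have hoo : o v = o w := by
                apply f.injective
                apply Fin.ext
                have h'' : (f (o v) : ℕ) + 1 = (f (o w) : ℕ) + 1 := h'
                omega
              exact hIndeg v w (o v) ((hO v hvS hvT (o v)).mpr rfl)
                ((hO w hwS hwT (o v)).mpr hoo) hvT hwT
    · -- all components unidirectional
      push_neg at hθ
      have huni : ∀ j, Unidirectional (len j) (σ j) := fun j =>
        (hall j).resolve_left (hθ j)
      set o : (Σ j, Fin (len j)) → (Σ j, Fin (len j)) :=
        fun v => ⟨v.1, if σ v.1 v.2 = true then v.2 + 1 else v.2 - 1⟩ with hodef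
      have hO : ∀ v y, Arc v y ↔ y = o v := by
        rintro ⟨j, u⟩ y
        rw [show Arc ⟨j, u⟩ y ↔ _ from TRA_unionArc_mk_iff]
        constructor
        · rintro ⟨w, hw, rfl⟩
          have := (TRA_uni_out (huni j) u w).mp hw
          rw [hodef]
          simp only []
          rw [this]
        · rintro rfl
          exact ⟨_, (TRA_uni_out (huni j) u _).mpr rfl, rfl⟩
      have hIndeg : ∀ v w y : Σ j, Fin (len j), Arc v y → Arc w y → v = w := by
        rintro ⟨j1, u1⟩ ⟨j2, u2⟩ ⟨j3, u3⟩ h1 h2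
        obtain rfl : j1 = j3 := TRA_unionArc_fst h1
        obtain rfl : j2 = j1 := TRA_unionArc_fst h2
        have h1' : cycleArc (len j2) (σ j2) u1 u3 := TRA_unionArc_same.mp h1
        have h2' : cycleArc (len j2) (σ j2) u2 u3 := TRA_unionArc_same.mp h2
        rw [TRA_uni_indeg (huni j2) h1' h2']
      refine ⟨Fintype.equivFin _, ?_⟩
      intro v w h
      simp only [] at h
      set f := Fintype.equivFin (Σ j, Fin (len j)) with hfdef
      set g : (Σ j, Fin (len j)) → ℕ := fun y => (f y : ℕ) + 1 with hgdef
      have hv : dWeight Arc {1} g v = g (o v) := TRA_wt_unique hloop (hO v)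
      have hw : dWeight Arc {1} g w = g (o w) := TRA_wt_unique hloop (hO w)
      have h' : g (o v) = g (o w) := by rw [← hv, ← hw]; exact h
      have hoo : o v = o w := by
        apply f.injective
        have := Nat.add_right_cancel h'
        exact Fin.ext this
      exact hIndeg v w (o v) ((hO v (o v)).mpr rfl) ((hO w (o v)).mpr hoo)
end

section
/- Let G⃗ = ⋃_{j=1}^t m_j C⃗_{n_j} be an oriented 2-regular graph with cycle orders n_1 < n_2 < … < n_t, n_j ≥ 3, m_j ≥ 1, and Σ_j m_j ≥ 2. For every integer k with 2 ≤ k ≤ n_1 − 1, G⃗ is {k}-antimagic if and only if every cycle component of G⃗ is unidirectional. -/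
open scoped Classical

open Fin.CommRing

lemma walklen_union_iff {c : ℕ} {len : Fin c → ℕ}
    {A : ∀ j, Fin (len j) → Fin (len j) → Prop}
    (m : ℕ) (j : Fin c) (x : Fin (len j)) (v : Σ j, Fin (len j)) :
    WalkLen (unionArc c len A) m ⟨j, x⟩ v ↔ ∃ y, v = ⟨j, y⟩ ∧ WalkLen (A j) m x y := by
  induction m generalizing x with
  | zero =>
    constructor
    · rintro rfl; exact ⟨x, rfl, rfl⟩
    · rintro ⟨y, rfl, rfl⟩; rfl
  | succ m ih =>
    constructor
    · rintro ⟨⟨j₁, z⟩, hw0, hw⟩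
      obtain ⟨h, harc⟩ := hw0
      have h' : j = j₁ := h
      subst h'
      obtain ⟨y, hv, hy⟩ := (ih z).mp hw
      exact ⟨y, hv, z, harc, hy⟩
    · rintro ⟨y, rfl, w, harc, hw⟩
      exact ⟨⟨j, w⟩, ⟨rfl, harc⟩, (ih w).mpr ⟨y, rfl, hw⟩⟩

lemma hasdist_union_iff {c : ℕ} {len : Fin c → ℕ}
    {A : ∀ j, Fin (len j) → Fin (len j) → Prop}
    (K : ℕ) (j : Fin c) (x : Fin (len j)) (v : Σ j, Fin (len j)) :
    HasDist (unionArc c len A) ⟨j, x⟩ v K ↔ ∃ y, v = ⟨j, y⟩ ∧ HasDist (A j) x y K := by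
  constructor
  · rintro ⟨h1, h2⟩
    obtain ⟨y, rfl, hy⟩ := (walklen_union_iff K j x _).mp h1
    exact ⟨y, rfl, hy, fun m hm hw => h2 m hm ((walklen_union_iff m j x _).mpr ⟨y, rfl, hw⟩)⟩
  · rintro ⟨y, rfl, h1, h2⟩
    refine ⟨(walklen_union_iff K j x _).mpr ⟨y, rfl, h1⟩, fun m hm hw => ?_⟩
    obtain ⟨y', hy', hw'⟩ := (walklen_union_iff m j x _).mp hw
    obtain rfl : y = y' := by simpa using hy'
    exact h2 m hm hw'

lemma val_succ_iff {n : ℕ} [NeZero n] (hn : 1 < n) (u v : Fin n) :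
    (v : ℕ) = ((u : ℕ) + 1) % n ↔ v = u + 1 := by
  have h1 : ((u + 1 : Fin n) : ℕ) = ((u : ℕ) + 1) % n := by
    rw [Fin.val_add, Fin.val_one', Nat.mod_eq_of_lt hn]
  constructor
  · intro h; exact Fin.val_injective (h.trans h1.symm)
  · intro h; rw [h]; exact h1

lemma walklen_shift {n : ℕ} [NeZero n] (d : Fin n) {R : Fin n → Fin n → Prop}
    (hR : ∀ u v, R u v ↔ v = u + d) (m : ℕ) (x y : Fin n) :
    WalkLen R m x y ↔ y = x + m • d := by
  induction m generalizing x with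
  | zero => simp [WalkLen, eq_comm]
  | succ m ih =>
    constructor
    · rintro ⟨w, hw, hwalk⟩
      rw [hR] at hw; subst hw
      rw [ih] at hwalk; subst hwalk
      rw [succ_nsmul]; abel
    · rintro rfl
      exact ⟨x + d, (hR _ _).mpr rfl, (ih _).mpr (by rw [succ_nsmul]; abel)⟩

lemma hasdist_shift {n : ℕ} [NeZero n] (d : Fin n) {R : Fin n → Fin n → Prop}
    (hR : ∀ u v, R u v ↔ v = u + d) (K : ℕ)
    (hd : ∀ m < K, (m • d : Fin n) ≠ K • d) (x y : Fin n) :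
    HasDist R x y K ↔ y = x + K • d := by
  constructor
  · rintro ⟨h1, _⟩; exact (walklen_shift d hR K x y).mp h1
  · rintro rfl
    refine ⟨(walklen_shift d hR K x _).mpr rfl, fun m hm hw => ?_⟩
    have h := (walklen_shift d hR m x _).mp hw
    exact hd m hm (add_left_cancel h.symm)

lemma cycleArc_true {n : ℕ} [NeZero n] (hn : 1 < n) {σ : Fin n → Bool}
    (hσ : ∀ i, σ i = true) (u v : Fin n) :
    cycleArc n σ u v ↔ v = u + 1 := by
  unfold cycleArc
  rw [val_succ_iff hn]
  simp [hσ]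

lemma cycleArc_false {n : ℕ} [NeZero n] (hn : 1 < n) {σ : Fin n → Bool}
    (hσ : ∀ i, σ i = false) (u v : Fin n) :
    cycleArc n σ u v ↔ v = u + (-1) := by
  constructor
  · rintro (⟨h1, _⟩ | ⟨_, h2⟩)
    · rw [hσ u] at h1; exact absurd h1 (by simp)
    · have h : u = v + 1 := (val_succ_iff hn v u).mp h2
      rw [h]; ring
  · rintro rfl
    exact Or.inr ⟨hσ _, (val_succ_iff hn _ u).mpr (by ring)⟩

lemma descent {n : ℕ} [NeZero n] {σ : Fin n → Bool} {b : Fin n} (hb : σ b = true)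
    {t : ℕ} (ht : σ (b + (t : Fin n)) = false) :
    ∃ r : ℕ, 0 < r ∧ r ≤ t ∧ σ (b + (r : Fin n)) = false ∧
      σ (b + ((r - 1 : ℕ) : Fin n)) = true := by
  have hex : ∃ r : ℕ, σ (b + (r : Fin n)) = false := ⟨t, ht⟩
  have hrf : σ (b + (Nat.find hex : Fin n)) = false := Nat.find_spec hex
  have hr0 : Nat.find hex ≠ 0 := by
    intro h
    rw [h] at hrf
    simp [hb] at hrf
  refine ⟨Nat.find hex, Nat.pos_of_ne_zero hr0, Nat.find_le ht, hrf, ?_⟩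
  have := Nat.find_min hex (show Nat.find hex - 1 < Nat.find hex by omega)
  simpa using this

lemma sink_of {n : ℕ} [NeZero n] (hn : 1 < n) {σ : Fin n → Bool} {p : Fin n}
    (hp : σ p = false) (hpm : σ (p - 1) = true) : ∀ v, ¬ cycleArc n σ p v := by
  intro v hv
  rcases hv with ⟨h1, _⟩ | ⟨h1, h2⟩
  · rw [hp] at h1; exact absurd h1 (by simp)
  · have h : p = v + 1 := (val_succ_iff hn v p).mp h2
    have hv1 : v = p - 1 := by rw [h]; ring
    rw [hv1, hpm] at h1
    exact absurd h1 (by simp)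

lemma one_ne_zero_fin {n : ℕ} [NeZero n] (hn : 1 < n) : (1 : Fin n) ≠ 0 := by
  intro h
  have := congrArg Fin.val h
  rw [Fin.val_one', Fin.val_zero, Nat.mod_eq_of_lt hn] at this
  exact one_ne_zero this

lemma exists_two_dead {n : ℕ} (hn : 3 ≤ n) {σ : Fin n → Bool}
    (h : ¬ Unidirectional n σ) :
    ∃ u s : Fin n, u ≠ s ∧ (∀ v, ¬ cycleArc n σ s v) ∧
      (∀ v, cycleArc n σ u v → v = s) := by
  haveI : NeZero n := ⟨by omega⟩
  have hn1 : 1 < n := by omega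
  rw [Unidirectional] at h
  push_neg at h
  obtain ⟨⟨a, ha⟩, b, hb⟩ := h
  replace ha : σ a = false := by simpa using ha
  replace hb : σ b = true := by simpa using hb
  have h0 : σ (b + (((a - b).val : ℕ) : Fin n)) = false := by
    rw [Fin.cast_val_eq_self]
    have hba : b + (a - b) = a := by ring
    rw [hba]; exact ha
  obtain ⟨r, hr0, -, hsf, hst⟩ := descent hb h0
  set s := b + (r : Fin n) with hs
  have hsm : σ (s - 1) = true := by
    have key : b + ((r - 1 : ℕ) : Fin n) = s - 1 := by
      rw [Nat.cast_sub (by omega : 1 ≤ r), Nat.cast_one, hs]; ring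
    rw [← key]; exact hst
  by_cases hA : σ (s - 2) = true
  · refine ⟨s - 1, s, ?_, sink_of hn1 hsf hsm, ?_⟩
    · intro hcon
      exact one_ne_zero_fin hn1 (sub_eq_self.mp hcon)
    · intro v hv
      rcases hv with ⟨h1, h2⟩ | ⟨h1, h2⟩
      · have h3 := (val_succ_iff hn1 _ v).mp h2
        rw [h3]; ring
      · have hvv : s - 1 = v + 1 := (val_succ_iff hn1 v _).mp h2
        have h3 : v = s - 2 := by linear_combination -hvv
        rw [h3, hA] at h1
        exact absurd h1 (by simp)
  · by_cases hB : σ (s + 1) = false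
    · refine ⟨s + 1, s, ?_, sink_of hn1 hsf hsm, ?_⟩
      · intro hcon
        exact one_ne_zero_fin hn1 (add_eq_left.mp hcon)
      · intro v hv
        rcases hv with ⟨h1, h2⟩ | ⟨h1, h2⟩
        · rw [hB] at h1; exact absurd h1 (by simp)
        · have hvv : s + 1 = v + 1 := (val_succ_iff hn1 v _).mp h2
          exact (add_right_cancel hvv).symm
    · replace hA : σ (s - 2) = false := by simpa using hA
      replace hB : σ (s + 1) = true := by simpa using hB
      have h0' : σ (s + 1 + ((n - 3 : ℕ) : Fin n)) = false := by
        have key : s + 1 + ((n - 3 : ℕ) : Fin n) = s - 2 := by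
          rw [Nat.cast_sub hn, Fin.natCast_self]
          simp only [Nat.cast_ofNat]
          ring
        rw [key]; exact hA
      obtain ⟨r', hr'0, hr'le, hs'f, hs't⟩ := descent hB h0'
      refine ⟨s + 1 + (r' : Fin n), s, ?_, sink_of hn1 hsf hsm, ?_⟩
      · intro hcon
        have h1 : s + ((r' + 1 : ℕ) : Fin n) = s := by
          push_cast
          linear_combination hcon
        have h2 := congrArg Fin.val (add_eq_left.mp h1)
        rw [Fin.val_natCast, Fin.val_zero, Nat.mod_eq_of_lt (by omega)] at h2
        omega
      · have hsm' : σ (s + 1 + (r' : Fin n) - 1) = true := by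
          have key : s + 1 + (r' : Fin n) - 1 = s + 1 + ((r' - 1 : ℕ) : Fin n) := by
            rw [Nat.cast_sub (by omega : 1 ≤ r'), Nat.cast_one]; ring
          rw [key]; exact hs't
        intro v hv
        exact absurd hv (sink_of hn1 hs'f hsm' v)

/-- For an oriented 2-regular graph with at least two cycle components,
each of order at least 3, and `2 ≤ k ≤ n₁ - 1` (`n₁` the smallest cycle order, i.e.
`k ≤ len j - 1` for every component `j`), the graph is `{k}`-antimagic iff every cycle
component is unidirectional. -/
theorem twoRegular_singleton_antimagic_iff_uni (c : ℕ) (hc : 2 ≤ c) (len : Fin c → ℕ)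
    (hlen : ∀ j, 3 ≤ len j) (σ : ∀ j, Fin (len j) → Bool) (k : ℕ)
    (hk2 : 2 ≤ k) (hk : ∀ j, k ≤ len j - 1) :
    DAntimagic (Σ j, Fin (len j))
        (unionArc c len fun j => cycleArc (len j) (σ j)) {k} ↔
      ∀ j, Unidirectional (len j) (σ j) := by
  constructor
  · intro hanti
    by_contra hnot
    push_neg at hnot
    obtain ⟨j, hj⟩ := hnot
    obtain ⟨u, s, hus, hsink, hout⟩ := exists_two_dead (hlen j) hj
    obtain ⟨f, hinj⟩ := hanti
    have hnos : ∀ y, ¬ WalkLen (cycleArc (len j) (σ j)) k s y := by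
      obtain ⟨m, rfl⟩ : ∃ m, k = m + 1 := ⟨k - 1, by omega⟩
      rintro y ⟨w, hw, -⟩
      exact hsink w hw
    have hnou : ∀ y, ¬ WalkLen (cycleArc (len j) (σ j)) k u y := by
      obtain ⟨m, rfl⟩ : ∃ m, k = m + 2 := ⟨k - 2, by omega⟩
      rintro y ⟨w, hw, w', hw', -⟩
      rw [hout w hw] at hw'
      exact hsink w' hw'
    have hzero : ∀ (x : Fin (len j)), (∀ y, ¬ WalkLen (cycleArc (len j) (σ j)) k x y) →
        dWeight (unionArc c len fun j => cycleArc (len j) (σ j)) {k}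
          (fun y => (f y : ℕ) + 1) ⟨j, x⟩ = 0 := by
      intro x hx
      rw [dWeight]
      apply Finset.sum_eq_zero
      intro y _
      rw [if_neg]
      rintro ⟨k', hk', hd1, -⟩
      rw [Set.mem_singleton_iff] at hk'
      rw [hk'] at hd1
      obtain ⟨y', -, hw⟩ := (walklen_union_iff k j x y).mp hd1
      exact hx y' hw
    have heq : dWeight (unionArc c len fun j => cycleArc (len j) (σ j)) {k}
          (fun y => (f y : ℕ) + 1) ⟨j, u⟩
        = dWeight (unionArc c len fun j => cycleArc (len j) (σ j)) {k}
          (fun y => (f y : ℕ) + 1) ⟨j, s⟩ := (hzero u hnou).trans (hzero s hnos).symm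
    have hc2 := hinj heq
    exact hus (by simpa using hc2)
  · intro huni
    have hdist : ∀ j, ∃ d : Fin (len j),
        ∀ x y, HasDist (cycleArc (len j) (σ j)) x y k ↔ y = x + d := by
      intro j
      haveI : NeZero (len j) := ⟨by have := hlen j; omega⟩
      have hn1 : 1 < len j := by have := hlen j; omega
      have hkn : k < len j := by have h1 := hlen j; have h2 := hk j; omega
      rcases huni j with h | h
      · refine ⟨k • 1, fun x y => hasdist_shift _ (cycleArc_true hn1 h) k ?_ x y⟩
        intro m hm hmeq
        have h2 : ((m : ℕ) : Fin (len j)) = (k : Fin (len j)) := by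
          simpa [nsmul_eq_mul] using hmeq
        have h3 := congrArg Fin.val h2
        rw [Fin.val_natCast, Fin.val_natCast, Nat.mod_eq_of_lt (by omega),
          Nat.mod_eq_of_lt hkn] at h3
        omega
      · refine ⟨k • (-1), fun x y => hasdist_shift _ (cycleArc_false hn1 h) k ?_ x y⟩
        intro m hm hmeq
        have h2 : ((m : ℕ) : Fin (len j)) = (k : Fin (len j)) := by
          have : -((m : ℕ) : Fin (len j)) = -(k : Fin (len j)) := by
            simpa [nsmul_eq_mul, mul_neg] using hmeq
          exact neg_injective this
        have h3 := congrArg Fin.val h2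
        rw [Fin.val_natCast, Fin.val_natCast, Nat.mod_eq_of_lt (by omega),
          Nat.mod_eq_of_lt hkn] at h3
        omega
    choose d hd using hdist
    set g : (Σ j, Fin (len j)) → (Σ j, Fin (len j)) := fun v => ⟨v.1, v.2 + d v.1⟩ with hg
    have ginj : Function.Injective g := by
      rintro ⟨j, x⟩ ⟨j', x'⟩ hgg
      have h1 : j = j' := congrArg Sigma.fst hgg
      subst h1
      have h2 : x + d j = x' + d j := by simpa [hg] using hgg
      haveI : NeZero (len j) := ⟨by have := hlen j; omega⟩
      have h3 : x = x' := add_right_cancel h2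
      rw [h3]
    have hnb : ∀ v y, InDNbhd (unionArc c len fun j => cycleArc (len j) (σ j)) {k} v y
        ↔ y = g v := by
      rintro ⟨j, x⟩ y
      constructor
      · rintro ⟨k', hk', hdd⟩
        rw [Set.mem_singleton_iff] at hk'
        rw [hk'] at hdd
        obtain ⟨y', rfl, hy'⟩ := (hasdist_union_iff k j x y).mp hdd
        rw [hd j x y'] at hy'
        rw [hy']
      · rintro rfl
        exact ⟨k, rfl, (hasdist_union_iff k j x _).mpr ⟨x + d j, rfl, (hd j x _).mpr rfl⟩⟩
    refine ⟨Fintype.equivFin _, fun a b hab => ?_⟩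
    have hw : ∀ v, dWeight (unionArc c len fun j => cycleArc (len j) (σ j)) {k}
        (fun y => ((Fintype.equivFin (Σ j, Fin (len j))) y : ℕ) + 1) v
        = ((Fintype.equivFin (Σ j, Fin (len j))) (g v) : ℕ) + 1 := by
      intro v
      rw [dWeight]
      rw [Finset.sum_congr rfl fun y _ => by rw [if_congr (hnb v y) rfl rfl]]
      rw [Finset.sum_ite_eq' Finset.univ (g v)]
      simp
    simp only at hab
    rw [hw a, hw b] at hab
    have h4 : (Fintype.equivFin (Σ j, Fin (len j))) (g a)
        = (Fintype.equivFin (Σ j, Fin (len j))) (g b) := by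
      apply Fin.val_injective; omega
    exact ginj ((Fintype.equivFin _).injective h4)
end
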